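/- Let (F, ≺) be an IS-family with minimum element sm(F). With M(x) = Σ_{S ∈ E_x} 2^{x − ex(S)} · |hat_x(S)|, one has M(x) ≤ 2^x · |sm(F)| for all x ≥ 0. -/

import Mathlib

/-- A family of subsets of a finite set `V` with a strict partial order. -/
structure ISFamily (V : Type*) [DecidableEq V] [Fintype V] where
  F : Finset (Finset V)
  prec : Finset V → Finset V → Prop
  prec_trans : ∀ {a b c : Finset V}, prec a b → prec b c → prec a c
  prec_irrefl : ∀ a : Finset V, ¬ prec a a

namespace ISFamily

variable {V : Type*} [DecidableEq V] [Fintype V] (Fam : ISFamily V)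

/-- The immediate predecessors of `S` in the family. -/
def Pred (S : Finset V) : Set (Finset V) :=
  {S' | S' ∈ Fam.F ∧ Fam.prec S' S ∧
    ¬ ∃ S'' ∈ Fam.F, Fam.prec S' S'' ∧ Fam.prec S'' S}

/-- `S'` covers `v` if some member of the family preceding `S'` contains `v` while
`S'` does not. -/
def Covers (S' : Finset V) (v : V) : Prop :=
  ∃ S'' ∈ Fam.F, Fam.prec S'' S' ∧ v ∈ S'' ∧ v ∉ S'

/-- The visible set of `S`: vertices belonging to some immediate predecessor of `S`
and not covered by any immediate predecessor of `S`. -/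
def Vis (S : Finset V) : Set V :=
  {v | (∃ S' ∈ Fam.Pred S, v ∈ S') ∧ ∀ S' ∈ Fam.Pred S, ¬ Fam.Covers S' v}

/-- `hat S = S \ ⋃_{S' ≺ S} S'`. -/
def hat (S : Finset V) : Set V :=
  ↑S \ ⋃ S' ∈ {S' | S' ∈ Fam.F ∧ Fam.prec S' S}, (↑S' : Set V)

/-- `W` is a witness of `v` w.r.t. `S`: a minimal element of the family with
`S ≺ W` and `v ∉ W`. -/
def IsWitness (S : Finset V) (v : V) (W : Finset V) : Prop :=
  W ∈ Fam.F ∧ Fam.prec S W ∧ v ∉ W ∧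
    ∀ W' ∈ Fam.F, Fam.prec S W' → v ∉ W' → ¬ Fam.prec W' W

/-- The axioms making `(F, ≺)` an IS-family with smallest element `sm`. -/
structure IsIS (sm : Finset V) : Prop where
  sm_mem : sm ∈ Fam.F
  SE : ∀ S ∈ Fam.F, S ≠ sm → Fam.prec sm S
  SM : ∀ S₁ ∈ Fam.F, ∀ S₂ ∈ Fam.F, Fam.prec S₁ S₂ → S₁.card < S₂.card
  SW : ∀ S ∈ Fam.F, ∀ v ∈ S, ∀ W₁ W₂ : Finset V,
    Fam.IsWitness S v W₁ → Fam.IsWitness S v W₂ → W₁ = W₂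
  TE : ∀ S₁ ∈ Fam.F, ∀ S₂ ∈ Fam.F, ∀ S₃ ∈ Fam.F,
    Fam.prec S₁ S₂ → Fam.prec S₂ S₃ → ∀ v ∈ S₁, v ∉ S₂ → v ∉ S₃
  LVS : ∀ S ∈ Fam.F, ∀ S' ∈ Fam.Pred S, S'.card ≤ (Fam.Vis S).ncard
  DVS : ∀ S ∈ Fam.F, S ≠ sm → ¬ (Fam.Vis S ⊆ ↑S)

/-- The excess of `S` relative to the smallest element `sm`. -/
def ex (sm S : Finset V) : ℕ := S.card - sm.card

/-- The members of the family of excess at most `x`. -/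
def Ex (sm : Finset V) (x : ℕ) : Finset (Finset V) :=
  Fam.F.filter (fun S => ex sm S ≤ x)

/-- The `x`-hat of `S`: elements of `hat S` not excluded by any member of `E_x`
succeeding `S`. -/
def hatx (sm : Finset V) (x : ℕ) (S : Finset V) : Set V :=
  {v ∈ Fam.hat S | ¬ ∃ S' ∈ Fam.Ex sm x, Fam.prec S S' ∧ v ∉ S'}

/-- `M(x) = Σ_{S ∈ E_x} 2^{x - ex(S)} · |hat_x(S)|`. -/
noncomputable def M (sm : Finset V) (x : ℕ) : ℕ :=
  ∑ S ∈ Fam.Ex sm x, 2 ^ (x - ex sm S) * (Fam.hatx sm x S).ncard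

end ISFamily

/-!
The proof is an induction on `x` using `M (x + 1) ≤ 2 * M x`. Passing from `x` to `x + 1`
doubles the weight of every `T ∈ E_x`, adds the sets `S` of excess exactly `x + 1` with weight
`1` (for them `hat_{x+1} S = hat S`), and drops `v` from `hat_x T` when such an `S` succeeds `T`
and misses `v`. Such an `S` is the witness of `(T, v)`, unique by (SW): the witness lies below
`S` but outside `E_x`. So at most one `S` removes a given pair `(T, v)`, and it suffices to
pay for `|hat S|` with the pairs `(T, v)` that `S` removes, each worth `2 ^ (|S| - |T|)`.

These pairs come from the vertices `v ∈ Vis S \ S`, which exist by (DVS). For such `v`, the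
`≺`-minimal `T` containing `v` below an immediate predecessor of `S` has `v ∈ hat_x T`: a member
of `E_x` missing `v` above `T` would, through the common witness and (TE), make an immediate
predecessor of `S` cover `v`. Since `hat S` and `Vis S ∩ S` are disjoint parts of `S`, (LVS) gives
`|hat S| ≤ |S| - |T| + |Vis S \ S| ≤ ∑_{v ∈ Vis S \ S} 2 ^ (|S| - |T_v|)`.
-/

lemma add_card_le_sum_two_pow {ι : Type*} {s : Finset ι} (w : ι → ℕ) {i : ι}
    (hi : i ∈ s) :
    w i + s.card ≤ ∑ j ∈ s, 2 ^ w j :=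
  calc w i + s.card ≤ ∑ j ∈ s, w j + s.card := by
        gcongr; exact Finset.single_le_sum (fun _ _ => Nat.zero_le _) hi
    _ = ∑ j ∈ s, (w j + 1) := by rw [Finset.sum_add_distrib, Finset.card_eq_sum_ones]
    _ ≤ ∑ j ∈ s, 2 ^ w j := Finset.sum_le_sum fun _ _ => Nat.lt_two_pow_self

namespace ISFamily

section Basic

variable {V : Type*} [DecidableEq V] [Fintype V] {Fam : ISFamily V} {sm S T : Finset V} {v : V}
  {x : ℕ}

lemma mem_hat : v ∈ Fam.hat S ↔ v ∈ S ∧ ∀ T ∈ Fam.F, Fam.prec T S → v ∉ T := by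
  simp only [hat, Set.mem_sdiff, Finset.mem_coe, Set.mem_iUnion, Set.mem_ofPred_eq, exists_prop,
    not_exists, not_and, and_imp]

lemma hat_subset : Fam.hat S ⊆ ↑S := fun _ hv => (mem_hat.1 hv).1

lemma hatx_subset_hat : Fam.hatx sm x S ⊆ Fam.hat S := fun _ hv => hv.1

lemma Ex_subset_Ex_succ : Fam.Ex sm x ⊆ Fam.Ex sm (x + 1) :=
  Finset.monotone_filter_right _ fun _ _ h => Nat.le_succ_of_le h

lemma hatx_succ_subset : Fam.hatx sm (x + 1) S ⊆ Fam.hatx sm x S :=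
  fun _ ⟨hv, hnot⟩ =>
    ⟨hv, fun ⟨S', hS', hSS', hvS'⟩ => hnot ⟨S', Ex_subset_Ex_succ hS', hSS', hvS'⟩⟩

lemma ncard_hat_add_ncard_Vis_le (S : Finset V) :
    (Fam.hat S).ncard + (Fam.Vis S).ncard ≤ S.card + (Fam.Vis S \ ↑S).ncard := by
  have hdisj : Disjoint (Fam.hat S) (Fam.Vis S ∩ ↑S) :=
    Set.disjoint_left.2 fun _ hv ⟨⟨⟨P, hP, hvP⟩, _⟩, _⟩ =>
      (mem_hat.1 hv).2 P hP.1 hP.2.1 hvP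
  have hle := Set.ncard_le_ncard (Set.union_subset (hat_subset (Fam := Fam) (S := S))
    (Set.inter_subset_right (s := Fam.Vis S)))
  have hsplit := Set.ncard_inter_add_ncard_sdiff_eq_ncard (Fam.Vis S) ↑S
  rw [Set.ncard_union_eq hdisj, Set.ncard_coe_finset] at hle
  omega

variable (Fam) in
open Classical in
noncomputable def excluded (sm : Finset V) (x : ℕ) (T S : Finset V) : Finset V :=
  Finset.univ.filter fun v => v ∈ Fam.hatx sm x T ∧ Fam.prec T S ∧ v ∉ S

lemma mem_excluded :
    v ∈ Fam.excluded sm x T S ↔ v ∈ Fam.hatx sm x T ∧ Fam.prec T S ∧ v ∉ S := by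
  simp [excluded]

end Basic

section Order

variable {V : Type*} [DecidableEq V] [Fintype V]

def PrecEq (Fam : ISFamily V) (S T : Finset V) : Prop := S = T ∨ Fam.prec S T

def CardStrictMono (Fam : ISFamily V) : Prop :=
  ∀ S₁ ∈ Fam.F, ∀ S₂ ∈ Fam.F, Fam.prec S₁ S₂ → S₁.card < S₂.card

variable {Fam : ISFamily V} {R S T : Finset V} {v : V}

lemma prec_of_precEq_of_prec (hRS : Fam.PrecEq R S) (hST : Fam.prec S T) : Fam.prec R T := by
  rcases hRS with rfl | hRS
  exacts [hST, Fam.prec_trans hRS hST]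

lemma prec_of_prec_of_precEq (hRS : Fam.prec R S) (hST : Fam.PrecEq S T) : Fam.prec R T := by
  rcases hST with rfl | hST
  exacts [hRS, Fam.prec_trans hRS hST]

lemma PrecEq.card_le (hSM : Fam.CardStrictMono) (hS : S ∈ Fam.F) (hT : T ∈ Fam.F)
    (hST : Fam.PrecEq S T) : S.card ≤ T.card := by
  rcases hST with rfl | hST
  exacts [le_rfl, (hSM S hS T hT hST).le]

lemma exists_minimal_precEq (hSM : Fam.CardStrictMono) (Q : Finset V → Prop)
    (hS : S ∈ Fam.F) (hQ : Q S) :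
    ∃ W ∈ Fam.F, Fam.PrecEq W S ∧ Q W ∧ ∀ W' ∈ Fam.F, Q W' → ¬ Fam.prec W' W := by
  classical
  obtain ⟨W, hW, hmin⟩ := (Fam.F.filter fun W => Fam.PrecEq W S ∧ Q W).exists_min_image
    Finset.card ⟨S, Finset.mem_filter.2 ⟨hS, Or.inl rfl, hQ⟩⟩
  obtain ⟨hWF, hWS, hQW⟩ := Finset.mem_filter.1 hW
  refine ⟨W, hWF, hWS, hQW, fun W' hW'F hQW' hW'W => ?_⟩
  have hle := hmin W'
    (Finset.mem_filter.2 ⟨hW'F, Or.inr (prec_of_prec_of_precEq hW'W hWS), hQW'⟩)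
  exact (hSM W' hW'F W hWF hW'W).not_ge hle

lemma exists_maximal_precEq (hSM : Fam.CardStrictMono) (Q : Finset V → Prop)
    (hS : S ∈ Fam.F) (hQ : Q S) :
    ∃ W ∈ Fam.F, Fam.PrecEq S W ∧ Q W ∧ ∀ W' ∈ Fam.F, Q W' → ¬ Fam.prec W W' := by
  classical
  obtain ⟨W, hW, hmax⟩ := (Fam.F.filter fun W => Fam.PrecEq S W ∧ Q W).exists_max_image
    Finset.card ⟨S, Finset.mem_filter.2 ⟨hS, Or.inl rfl, hQ⟩⟩
  obtain ⟨hWF, hSW, hQW⟩ := Finset.mem_filter.1 hW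
  refine ⟨W, hWF, hSW, hQW, fun W' hW'F hQW' hWW' => ?_⟩
  have hle := hmax W'
    (Finset.mem_filter.2 ⟨hW'F, Or.inr (prec_of_precEq_of_prec hSW hWW'), hQW'⟩)
  exact (hSM W hWF W' hW'F hWW').not_ge hle

lemma exists_witness_precEq (hSM : Fam.CardStrictMono) (hS : S ∈ Fam.F) (hTS : Fam.prec T S)
    (hvS : v ∉ S) :
    ∃ W, Fam.IsWitness T v W ∧ Fam.PrecEq W S := by
  obtain ⟨W, hWF, hWS, ⟨hTW, hvW⟩, hmin⟩ :=
    exists_minimal_precEq hSM (fun W => Fam.prec T W ∧ v ∉ W) hS ⟨hTS, hvS⟩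
  exact ⟨W, ⟨hWF, hTW, hvW, fun W' hW'F hTW' hvW' => hmin W' hW'F ⟨hTW', hvW'⟩⟩, hWS⟩

lemma exists_precEq_mem_hat (hSM : Fam.CardStrictMono) (hT : T ∈ Fam.F) (hv : v ∈ T) :
    ∃ T₀ ∈ Fam.F, Fam.PrecEq T₀ T ∧ v ∈ Fam.hat T₀ := by
  obtain ⟨T₀, hT₀F, hT₀T, hvT₀, hmin⟩ := exists_minimal_precEq hSM (v ∈ ·) hT hv
  exact ⟨T₀, hT₀F, hT₀T,
    mem_hat.2 ⟨hvT₀, fun P hP hPT₀ hvP => hmin P hP hvP hPT₀⟩⟩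

lemma exists_mem_Pred_precEq (hSM : Fam.CardStrictMono) (hT : T ∈ Fam.F)
    (hTS : Fam.prec T S) :
    ∃ P ∈ Fam.Pred S, Fam.PrecEq T P := by
  obtain ⟨P, hPF, hTP, hPS, hmax⟩ := exists_maximal_precEq hSM (Fam.prec · S) hT hTS
  exact ⟨P, ⟨hPF, hPS, fun ⟨P', hP'F, hPP', hP'S⟩ => hmax P' hP'F hP'S hPP'⟩, hTP⟩

end Order

namespace IsIS

variable {V : Type*} [DecidableEq V] [Fintype V] {Fam : ISFamily V} {sm S T : Finset V} {v : V}
  {x : ℕ}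

lemma card_eq_add_ex (hIS : Fam.IsIS sm) (hS : S ∈ Fam.F) : S.card = sm.card + ex sm S := by
  have : sm.card ≤ S.card := by
    by_cases h : S = sm
    · rw [h]
    · exact (hIS.SM sm hIS.sm_mem S hS (hIS.SE S hS h)).le
  unfold ex
  omega

lemma mem_Ex_iff (hIS : Fam.IsIS sm) :
    S ∈ Fam.Ex sm x ↔ S ∈ Fam.F ∧ S.card ≤ sm.card + x := by
  refine ⟨fun h => ?_, fun ⟨hS, hcard⟩ => Finset.mem_filter.2 ⟨hS, ?_⟩⟩
  · obtain ⟨hS, hex⟩ := Finset.mem_filter.1 h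
    exact ⟨hS, (hIS.card_eq_add_ex hS).trans_le (by omega)⟩
  · have := hIS.card_eq_add_ex hS
    omega

lemma Ex_zero (hIS : Fam.IsIS sm) : Fam.Ex sm 0 = {sm} := by
  ext S
  rw [hIS.mem_Ex_iff, Finset.mem_singleton]
  refine ⟨fun ⟨hS, hcard⟩ => by_contra fun hne => ?_, ?_⟩
  · exact (hIS.SM sm hIS.sm_mem S hS (hIS.SE S hS hne)).not_ge hcard
  · rintro rfl
    exact ⟨hIS.sm_mem, le_rfl⟩

/-- A set of excess exactly `x` has no successor in `E_x`. -/
lemma hatx_eq_hat (hIS : Fam.IsIS sm) (hS : S ∈ Fam.F) (hcard : S.card = sm.card + x) :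
    Fam.hatx sm x S = Fam.hat S := by
  refine Set.Subset.antisymm hatx_subset_hat fun v hv => ⟨hv, ?_⟩
  rintro ⟨S', hS', hSS', -⟩
  obtain ⟨hS'F, hS'card⟩ := hIS.mem_Ex_iff.1 hS'
  exact (hIS.SM S hS S' hS'F hSS').not_ge (hcard ▸ hS'card)

lemma eq_witness_of_mem_hatx (hIS : Fam.IsIS sm) (hT : T ∈ Fam.F) (hv : v ∈ Fam.hatx sm x T)
    (hS : S ∈ Fam.F) (hcard : S.card = sm.card + (x + 1)) (hTS : Fam.prec T S) (hvS : v ∉ S)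
    {W : Finset V} (hW : Fam.IsWitness T v W) : S = W := by
  obtain ⟨W', hW', hW'S⟩ := exists_witness_precEq hIS.SM hS hTS hvS
  obtain rfl := hIS.SW T hT v (hat_subset (hatx_subset_hat hv)) W W' hW hW'
  have hWx : ¬ W.card ≤ sm.card + x := fun h =>
    hv.2 ⟨W, hIS.mem_Ex_iff.2 ⟨hW.1, h⟩, hW.2.1, hW.2.2.1⟩
  rcases hW'S with rfl | hWS
  · rfl
  · exact absurd (hIS.SM W hW.1 S hS hWS) (by omega)

lemma eq_of_mem_hatx_of_notMem {S₁ S₂ : Finset V} (hIS : Fam.IsIS sm) (hT : T ∈ Fam.F)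
    (hv : v ∈ Fam.hatx sm x T)
    (hS₁ : S₁ ∈ Fam.F) (hcard₁ : S₁.card = sm.card + (x + 1)) (hTS₁ : Fam.prec T S₁)
    (hvS₁ : v ∉ S₁)
    (hS₂ : S₂ ∈ Fam.F) (hcard₂ : S₂.card = sm.card + (x + 1)) (hTS₂ : Fam.prec T S₂)
    (hvS₂ : v ∉ S₂) : S₁ = S₂ := by
  obtain ⟨W, hW, -⟩ := exists_witness_precEq hIS.SM hS₁ hTS₁ hvS₁
  exact (hIS.eq_witness_of_mem_hatx hT hv hS₁ hcard₁ hTS₁ hvS₁ hW).trans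
    (hIS.eq_witness_of_mem_hatx hT hv hS₂ hcard₂ hTS₂ hvS₂ hW).symm

lemma exists_mem_hatx_of_mem_Vis (hIS : Fam.IsIS sm) (hS : S ∈ Fam.F)
    (hcard : S.card = sm.card + (x + 1)) (hvis : v ∈ Fam.Vis S) (hvS : v ∉ S) :
    ∃ T ∈ Fam.F, Fam.prec T S ∧ v ∈ Fam.hatx sm x T ∧ T.card ≤ (Fam.Vis S).ncard := by
  obtain ⟨⟨P, hP, hvP⟩, huncovered⟩ := hvis
  obtain ⟨T, hTF, hTP, hvT⟩ := exists_precEq_mem_hat hIS.SM hP.1 hvP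
  have hTS := prec_of_precEq_of_prec hTP hP.2.1
  have hvT' : v ∈ T := hat_subset hvT
  refine ⟨T, hTF, hTS, ⟨hvT, ?_⟩, (hTP.card_le hIS.SM hTF hP.1).trans (hIS.LVS S hS P hP)⟩
  -- The witness of `(T, v)` lies below `R ∈ E_x`, hence strictly below `S`; an immediate
  -- predecessor of `S` above it misses `v` by (TE) and so covers `v`.
  rintro ⟨R, hR, hTR, hvR⟩
  obtain ⟨hRF, hRcard⟩ := hIS.mem_Ex_iff.1 hR
  obtain ⟨W, hW, hWR⟩ := exists_witness_precEq hIS.SM hRF hTR hvR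
  obtain ⟨W', hW', hW'S⟩ := exists_witness_precEq hIS.SM hS hTS hvS
  obtain rfl := hIS.SW T hTF v hvT' W W' hW hW'
  have hWS : Fam.prec W S := by
    rcases hW'S with rfl | hWS
    · exact absurd (hWR.card_le hIS.SM hW.1 hRF) (by omega)
    · exact hWS
  obtain ⟨Q, hQ, hWQ⟩ := exists_mem_Pred_precEq hIS.SM hW.1 hWS
  have hvQ : v ∉ Q := by
    rcases hWQ with rfl | hWQ
    exacts [hW.2.2.1, hIS.TE T hTF W hW.1 Q hQ.1 hW.2.1 hWQ v hvT' hW.2.2.1]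
  exact huncovered Q hQ ⟨T, hTF, prec_of_prec_of_precEq hW.2.1 hWQ, hvT', hvQ⟩

lemma ncard_hat_le_sum_excluded (hIS : Fam.IsIS sm) (hS : S ∈ Fam.F)
    (hcard : S.card = sm.card + (x + 1)) :
    (Fam.hat S).ncard ≤
      ∑ T ∈ Fam.Ex sm x, 2 ^ (x + 1 - ex sm T) * (Fam.excluded sm x T S).card := by
  classical
  set B := (Fam.Vis S \ ↑S).toFinset
  obtain ⟨v₀, hv₀⟩ : B.Nonempty := by
    have hne : S ≠ sm := by rintro rfl; omega
    obtain ⟨v, hvis, hvS⟩ := Set.not_subset.1 (hIS.DVS S hS hne)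
    exact ⟨v, Set.mem_toFinset.2 ⟨hvis, hvS⟩⟩
  have hchoice : ∀ v ∈ B,
      ∃ T ∈ Fam.F, Fam.prec T S ∧ v ∈ Fam.hatx sm x T ∧ T.card ≤ (Fam.Vis S).ncard :=
    fun v hv => hIS.exists_mem_hatx_of_mem_Vis hS hcard (Set.mem_toFinset.1 hv).1
      (Set.mem_toFinset.1 hv).2
  choose! τ hτF hτS hτhatx hτcard using hchoice
  have hτEx : ∀ v ∈ B, τ v ∈ Fam.Ex sm x := fun v hv => by
    have := hIS.SM _ (hτF v hv) S hS (hτS v hv)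
    exact hIS.mem_Ex_iff.2 ⟨hτF v hv, by omega⟩
  have hweight : ∀ v ∈ B, S.card - (τ v).card = x + 1 - ex sm (τ v) := fun v hv => by
    have := hIS.card_eq_add_ex (hτF v hv)
    omega
  calc (Fam.hat S).ncard ≤ (S.card - (τ v₀).card) + B.card := by
        have := ncard_hat_add_ncard_Vis_le (Fam := Fam) S
        have hB : (Fam.Vis S \ ↑S).ncard = B.card := Set.ncard_eq_toFinset_card' _
        have := hτcard v₀ hv₀
        omega
    _ ≤ ∑ v ∈ B, 2 ^ (S.card - (τ v).card) :=
        add_card_le_sum_two_pow (fun v => S.card - (τ v).card) hv₀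
    _ = ∑ T ∈ Fam.Ex sm x, ∑ v ∈ B with τ v = T, 2 ^ (x + 1 - ex sm T) := by
        rw [← Finset.sum_fiberwise_of_maps_to hτEx]
        refine Finset.sum_congr rfl fun T _ => Finset.sum_congr rfl fun v hv => ?_
        obtain ⟨hvB, rfl⟩ := Finset.mem_filter.1 hv
        rw [hweight v hvB]
    _ ≤ _ := by
        gcongr with T
        rw [Finset.sum_const, smul_eq_mul, mul_comm]
        gcongr
        intro v hv
        obtain ⟨hvB, rfl⟩ := Finset.mem_filter.1 hv
        exact mem_excluded.2 ⟨hτhatx v hvB, hτS v hvB, (Set.mem_toFinset.1 hvB).2⟩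

lemma sum_card_excluded_add_ncard_hatx_succ_le (hIS : Fam.IsIS sm) (hT : T ∈ Fam.F)
    {N : Finset (Finset V)} (hN : ∀ S ∈ N, S ∈ Fam.F ∧ S.card = sm.card + (x + 1)) :
    ∑ S ∈ N, (Fam.excluded sm x T S).card + (Fam.hatx sm (x + 1) T).ncard ≤
      (Fam.hatx sm x T).ncard := by
  classical
  have hdisj : (↑N : Set (Finset V)).PairwiseDisjoint (Fam.excluded sm x T) := by
    intro S₁ h₁ S₂ h₂ hne
    refine Finset.disjoint_left.2 fun v hv₁ hv₂ => hne ?_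
    obtain ⟨hv, hTS₁, hvS₁⟩ := mem_excluded.1 hv₁
    obtain ⟨-, hTS₂, hvS₂⟩ := mem_excluded.1 hv₂
    exact hIS.eq_of_mem_hatx_of_notMem hT hv (hN S₁ h₁).1 (hN S₁ h₁).2 hTS₁ hvS₁
      (hN S₂ h₂).1 (hN S₂ h₂).2 hTS₂ hvS₂
  have hdisj' :
      Disjoint (N.biUnion (Fam.excluded sm x T)) (Fam.hatx sm (x + 1) T).toFinset := by
    refine Finset.disjoint_left.2 fun v hv hv' => ?_
    obtain ⟨S, hS, hvS⟩ := Finset.mem_biUnion.1 hv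
    obtain ⟨-, hTS, hvS⟩ := mem_excluded.1 hvS
    exact (Set.mem_toFinset.1 hv').2
      ⟨S, hIS.mem_Ex_iff.2 ⟨(hN S hS).1, (hN S hS).2.le⟩, hTS, hvS⟩
  rw [Set.ncard_eq_toFinset_card', Set.ncard_eq_toFinset_card', ← Finset.card_biUnion hdisj,
    ← Finset.card_union_of_disjoint hdisj']
  refine Finset.card_le_card (Finset.union_subset (fun v hv => ?_)
    (Set.toFinset_subset_toFinset.2 hatx_succ_subset))
  obtain ⟨S, -, hvS⟩ := Finset.mem_biUnion.1 hv
  exact Set.mem_toFinset.2 (mem_excluded.1 hvS).1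

lemma M_zero_le (hIS : Fam.IsIS sm) : Fam.M sm 0 ≤ sm.card := by
  rw [M, hIS.Ex_zero, Finset.sum_singleton, ex, Nat.sub_self, pow_zero, one_mul,
    ← Set.ncard_coe_finset]
  exact Set.ncard_le_ncard (hatx_subset_hat.trans hat_subset)

lemma M_succ_le (hIS : Fam.IsIS sm) (x : ℕ) : Fam.M sm (x + 1) ≤ 2 * Fam.M sm x := by
  classical
  set N := Fam.Ex sm (x + 1) \ Fam.Ex sm x
  have hN : ∀ S ∈ N, S ∈ Fam.F ∧ S.card = sm.card + (x + 1) := fun S hS => by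
    obtain ⟨hS₁, hS₀⟩ := Finset.mem_sdiff.1 hS
    obtain ⟨hSF, hcard⟩ := hIS.mem_Ex_iff.1 hS₁
    have hnot : ¬ S.card ≤ sm.card + x := fun h => hS₀ (hIS.mem_Ex_iff.2 ⟨hSF, h⟩)
    exact ⟨hSF, by omega⟩
  have hweight : ∀ T ∈ Fam.Ex sm x, 2 ^ (x + 1 - ex sm T) = 2 * 2 ^ (x - ex sm T) :=
    fun T hT => by
    rw [← pow_succ', Nat.sub_add_comm (Finset.mem_filter.1 hT).2]
  calc Fam.M sm (x + 1)
      = ∑ S ∈ N, (Fam.hat S).ncard +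
          ∑ T ∈ Fam.Ex sm x, 2 ^ (x + 1 - ex sm T) * (Fam.hatx sm (x + 1) T).ncard := by
        rw [M, ← Finset.sum_sdiff Ex_subset_Ex_succ]
        congr 1
        refine Finset.sum_congr rfl fun S hS => ?_
        rw [hIS.hatx_eq_hat (hN S hS).1 (hN S hS).2, ex, (hN S hS).2, Nat.add_sub_cancel_left,
          Nat.sub_self, pow_zero, one_mul]
    _ ≤ ∑ S ∈ N, ∑ T ∈ Fam.Ex sm x, 2 ^ (x + 1 - ex sm T) * (Fam.excluded sm x T S).card +
          ∑ T ∈ Fam.Ex sm x, 2 ^ (x + 1 - ex sm T) * (Fam.hatx sm (x + 1) T).ncard := by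
        gcongr with S hS
        exact hIS.ncard_hat_le_sum_excluded (hN S hS).1 (hN S hS).2
    _ = ∑ T ∈ Fam.Ex sm x, 2 ^ (x + 1 - ex sm T) *
          (∑ S ∈ N, (Fam.excluded sm x T S).card + (Fam.hatx sm (x + 1) T).ncard) := by
        rw [Finset.sum_comm, ← Finset.sum_add_distrib]
        simp only [Finset.mul_sum, mul_add]
    _ ≤ ∑ T ∈ Fam.Ex sm x, 2 ^ (x + 1 - ex sm T) * (Fam.hatx sm x T).ncard := by
        gcongr with T hT
        exact hIS.sum_card_excluded_add_ncard_hatx_succ_le (Finset.mem_filter.1 hT).1 hN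
    _ = 2 * Fam.M sm x := by
        rw [M, Finset.mul_sum]
        exact Finset.sum_congr rfl fun T hT => by rw [hweight T hT, mul_assoc]

end IsIS

end ISFamily

open ISFamily in
/-- `M(x) ≤ 2^x · |sm(F)|` for every `x ≥ 0`. -/
theorem main_level_bound {V : Type*} [DecidableEq V] [Fintype V]
    (Fam : ISFamily V) (sm : Finset V) (hIS : Fam.IsIS sm) (x : ℕ) :
    Fam.M sm x ≤ 2 ^ x * sm.card := by
  induction x with
  | zero => simpa using hIS.M_zero_le
  | succ x ih =>
    calc Fam.M sm (x + 1) ≤ 2 * Fam.M sm x := hIS.M_succ_le x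
      _ ≤ 2 * (2 ^ x * sm.card) := Nat.mul_le_mul_left 2 ih
      _ = 2 ^ (x + 1) * sm.card := by ring
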